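/- Let φ : [0,1] → ℝ be continuously differentiable and strictly increasing. Then an idealised conformity measure A is S_φ-optimal if and only if A is a refinement of the CP idealised conformity measure; that is, O(S_φ) = R(CP). -/

import Mathlib

noncomputable section Conformal

open Finset

variable {X Y : Type*} [Fintype X] [Fintype Y] [DecidableEq Y]

/-- The p-value `p_A(x,y,τ) = Q{z : A z < A (x,y)} + τ·Q{z : A z = A (x,y)}`. -/
def pValue (Q A : X × Y → ℝ) (x : X) (y : Y) (τ : ℝ) : ℝ :=
  (∑ z : X × Y, if A z < A (x, y) then Q z else 0)
    + τ * ∑ z : X × Y, if A z = A (x, y) then Q z else 0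

/-- The prediction set `Γ_A^ε(x,τ) = {y : p_A(x,y,τ) > ε}`. -/
def predSet (Q A : X × Y → ℝ) (ε : ℝ) (x : X) (τ : ℝ) : Finset Y :=
  Finset.univ.filter fun y => ε < pValue Q A x y τ

/-- The marginal `Q_X` of `Q` on the object space. -/
def margX (Q : X × Y → ℝ) (x : X) : ℝ := ∑ y, Q (x, y)

/-- The marginal `Q_Y` of `Q` on the label space. -/
def margY (Q : X × Y → ℝ) (y : Y) : ℝ := ∑ x, Q (x, y)

/-- The conditional probability `Q(y|x)`; as a function of `z = (x,y)` this is the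
CP idealised conformity measure. -/
def condQ (Q : X × Y → ℝ) (z : X × Y) : ℝ := Q z / margX Q z.1

/-- Expectation `E_{x,τ}` with `x ~ Q_X` and `τ` uniform on `[0,1]`, independent. -/
def expXT (Q : X × Y → ℝ) (g : X → ℝ → ℝ) : ℝ :=
  ∑ x, margX Q x * ∫ τ in (0:ℝ)..1, g x τ

/-- Expectation `E_{(x,y),τ}` with `(x,y) ~ Q` and `τ` uniform on `[0,1]`, independent. -/
def expZT (Q : X × Y → ℝ) (g : X × Y → ℝ → ℝ) : ℝ :=
  ∑ z, Q z * ∫ τ in (0:ℝ)..1, g z τ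

open Classical in
/-- Probability `Prob_{x,τ}` with `x ~ Q_X` and `τ` uniform on `[0,1]`, independent. -/
def probXT (Q : X × Y → ℝ) (P : X → ℝ → Prop) : ℝ :=
  expXT Q fun x τ => if P x τ then 1 else 0

open Classical in
/-- Probability `Prob_{(x,y),τ}` with `(x,y) ~ Q` and `τ` uniform on `[0,1]`, independent. -/
def probZT (Q : X × Y → ℝ) (P : X × Y → ℝ → Prop) : ℝ :=
  expZT Q fun z τ => if P z τ then 1 else 0

/-- `A` is a refinement of `B`. -/
def Refines (A B : X × Y → ℝ) : Prop :=
  ∀ z1 z2 : X × Y, B z1 < B z2 → A z1 < A z2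

/-- `max_{y' ≠ y} p_A(x,y',τ)`. -/
def maxOther (Q A : X × Y → ℝ) (x : X) (y : Y) (τ : ℝ) : ℝ :=
  ⨆ y' : {y' : Y // y' ≠ y}, pValue Q A x y'.1 τ

/-- The unconfidence `min_y max_{y' ≠ y} p_A(x,y',τ)`. -/
def unconf (Q A : X × Y → ℝ) (x : X) (τ : ℝ) : ℝ := ⨅ y : Y, maxOther Q A x y τ

/-- The credibility `max_y p_A(x,y,τ)`. -/
def maxPV (Q A : X × Y → ℝ) (x : X) (τ : ℝ) : ℝ := ⨆ y : Y, pValue Q A x y τ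

/-- The predictability `f(x) = max_y Q(y|x)`. -/
def predictability (Q : X × Y → ℝ) (x : X) : ℝ := ⨆ y : Y, condQ Q (x, y)

/-- `c` is a choice function: `Q(c x | x) = f(x)` for all `x`. -/
def IsChoiceFun (Q : X × Y → ℝ) (c : X → Y) : Prop :=
  ∀ x, condQ Q (x, c x) = predictability Q x

/-- The signed predictability (SP) idealised conformity measure corresponding to `c`. -/
def SPMeasure (Q : X × Y → ℝ) (c : X → Y) : X × Y → ℝ := fun z =>
  if z.2 = c z.1 then predictability Q z.1 else -predictability Q z.1

/-- The modified conditional probability (MCP) idealised conformity measure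
corresponding to `c`. -/
def MCPMeasure (Q : X × Y → ℝ) (c : X → Y) : X × Y → ℝ := fun z =>
  if z.2 = c z.1 then condQ Q z else condQ Q z - 1

/-- The modified signed predictability (MSP) idealised conformity measure
(independent of the choice function: `y = ŷ(x)` iff `Q(y|x) = f(x)` when `f(x) > 1/2`). -/
def MSPMeasure (Q : X × Y → ℝ) : X × Y → ℝ := fun z =>
  if 1 / 2 < predictability Q z.1 then
    if condQ Q z = predictability Q z.1 then predictability Q z.1
    else -predictability Q z.1
  else 0

/-- S-optimality. -/
def SOpt (Q A : X × Y → ℝ) : Prop :=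
  ∀ B : X × Y → ℝ,
    expXT Q (fun x τ => ∑ y, pValue Q A x y τ)
      ≤ expXT Q (fun x τ => ∑ y, pValue Q B x y τ)

/-- N-optimality. -/
def NOpt (Q A : X × Y → ℝ) : Prop :=
  ∀ B : X × Y → ℝ, ∀ ε ∈ Set.Ioo (0:ℝ) 1,
    expXT Q (fun x τ => ((predSet Q A ε x τ).card : ℝ))
      ≤ expXT Q (fun x τ => ((predSet Q B ε x τ).card : ℝ))

/-- OF-optimality. -/
def OFOpt (Q A : X × Y → ℝ) : Prop :=
  ∀ B : X × Y → ℝ,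
    expZT Q (fun z τ => ∑ y' ∈ Finset.univ.erase z.2, pValue Q A z.1 y' τ)
      ≤ expZT Q (fun z τ => ∑ y' ∈ Finset.univ.erase z.2, pValue Q B z.1 y' τ)

/-- OE-optimality. -/
def OEOpt (Q A : X × Y → ℝ) : Prop :=
  ∀ B : X × Y → ℝ, ∀ ε ∈ Set.Ioo (0:ℝ) 1,
    expZT Q (fun z τ => (((predSet Q A ε z.1 τ).erase z.2).card : ℝ))
      ≤ expZT Q (fun z τ => (((predSet Q B ε z.1 τ).erase z.2).card : ℝ))

/-- U-optimality. -/
def UOpt (Q A : X × Y → ℝ) : Prop :=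
  ∀ B : X × Y → ℝ,
    expXT Q (unconf Q A) < expXT Q (unconf Q B) ∨
      (expXT Q (unconf Q A) = expXT Q (unconf Q B) ∧
        expXT Q (maxPV Q A) ≤ expXT Q (maxPV Q B))

/-- M-optimality. -/
def MOpt (Q A : X × Y → ℝ) : Prop :=
  ∀ B : X × Y → ℝ, ∀ ε ∈ Set.Ioo (0:ℝ) 1,
    probXT Q (fun x τ => 1 < (predSet Q A ε x τ).card)
        < probXT Q (fun x τ => 1 < (predSet Q B ε x τ).card) ∨
      (probXT Q (fun x τ => 1 < (predSet Q A ε x τ).card)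
          = probXT Q (fun x τ => 1 < (predSet Q B ε x τ).card) ∧
        probXT Q (fun x τ => (predSet Q B ε x τ).card = 0)
          ≤ probXT Q (fun x τ => (predSet Q A ε x τ).card = 0))

/-- F-optimality. -/
def FOpt (Q A : X × Y → ℝ) : Prop :=
  ∀ B : X × Y → ℝ,
    expXT Q (fun x τ => (∑ y, pValue Q A x y τ) - maxPV Q A x τ)
        < expXT Q (fun x τ => (∑ y, pValue Q B x y τ) - maxPV Q B x τ) ∨
      (expXT Q (fun x τ => (∑ y, pValue Q A x y τ) - maxPV Q A x τ)
          = expXT Q (fun x τ => (∑ y, pValue Q B x y τ) - maxPV Q B x τ) ∧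
        expXT Q (maxPV Q A) ≤ expXT Q (maxPV Q B))

/-- E-optimality. -/
def EOpt (Q A : X × Y → ℝ) : Prop :=
  ∀ B : X × Y → ℝ, ∀ ε ∈ Set.Ioo (0:ℝ) 1,
    expXT Q (fun x τ => max (((predSet Q A ε x τ).card : ℝ) - 1) 0)
        < expXT Q (fun x τ => max (((predSet Q B ε x τ).card : ℝ) - 1) 0) ∨
      (expXT Q (fun x τ => max (((predSet Q A ε x τ).card : ℝ) - 1) 0)
          = expXT Q (fun x τ => max (((predSet Q B ε x τ).card : ℝ) - 1) 0) ∧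
        probXT Q (fun x τ => (predSet Q B ε x τ).card = 0)
          ≤ probXT Q (fun x τ => (predSet Q A ε x τ).card = 0))

/-- OU-optimality. -/
def OUOpt (Q A : X × Y → ℝ) : Prop :=
  ∀ B : X × Y → ℝ,
    expZT Q (fun z τ => maxOther Q A z.1 z.2 τ)
      ≤ expZT Q (fun z τ => maxOther Q B z.1 z.2 τ)

/-- OM-optimality. -/
def OMOpt (Q A : X × Y → ℝ) : Prop :=
  ∀ B : X × Y → ℝ, ∀ ε ∈ Set.Ioo (0:ℝ) 1,
    probZT Q (fun z τ => ((predSet Q A ε z.1 τ).erase z.2).Nonempty)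
      ≤ probZT Q (fun z τ => ((predSet Q B ε z.1 τ).erase z.2).Nonempty)

end Conformal

/-!
Write the p-value of `z` under `B` as `L + τ M`, with `L = Q{B < B z}` and `M = Q{B = B z}`.
Averaging the layer-cake formula `φ p = φ 0 + ∫₀¹ φ'(ε) 1[ε ≤ p] dε` over `τ` turns the `S_φ`
criterion of `B` into `φ 0 · Σ Q_X + ∫₀¹ φ'(ε) N_B(ε) dε`, where `N_B(ε)` is the expected size of
the prediction set at level `ε`. Every conformity measure is exactly valid, so
`N_B(ε) - N_CP(ε) = Σ_z (Q_X z - Q z / c) (P(B selects z) - P(CP selects z))` for every `c ≠ 0`.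
Taking for `c` the `ε`-quantile level of `Q(y|x)` makes every summand nonnegative
(Neyman–Pearson), and every summand vanishes when `B` refines CP. A pair witnessing
non-refinement makes one summand positive for all `ε` in an interval, on which `φ'` has positive
integral because `φ` is strictly increasing.
-/

open Finset

namespace ConformalOptimality

/-- The length of `{τ ∈ [0,1] : ε ≤ L + τ * M}` when `M ≥ 0`. -/
noncomputable def levelFrac (L M ε : ℝ) : ℝ :=
  if M = 0 then (if ε ≤ L then 1 else 0) else min 1 (max 0 ((L + M - ε) / M))

section LevelFrac

variable {L M ε : ℝ}

lemma levelFrac_nonneg (L M ε : ℝ) : 0 ≤ levelFrac L M ε := by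
  unfold levelFrac; split_ifs <;> simp

lemma levelFrac_le_one (L M ε : ℝ) : levelFrac L M ε ≤ 1 := by
  unfold levelFrac; split_ifs <;> simp

lemma levelFrac_eq_one (hM : 0 ≤ M) (h : ε ≤ L) : levelFrac L M ε = 1 := by
  unfold levelFrac
  split_ifs with hM0
  · rfl
  · have hMpos : 0 < M := lt_of_le_of_ne hM (Ne.symm hM0)
    exact min_eq_left (le_max_of_le_right ((one_le_div hMpos).2 (by linarith)))

lemma levelFrac_eq_zero (hM : 0 ≤ M) (h : L + M < ε) : levelFrac L M ε = 0 := by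
  unfold levelFrac
  split_ifs with hM0 hεL
  · subst hM0; linarith
  · rfl
  · rw [max_eq_left (div_nonpos_of_nonpos_of_nonneg (by linarith) hM), min_eq_right zero_le_one]

lemma levelFrac_of_mem_Icc (hM : 0 < M) (h : ε ∈ Set.Icc L (L + M)) :
    levelFrac L M ε = (L + M - ε) / M := by
  rw [levelFrac, if_neg hM.ne', max_eq_right (div_nonneg (by linarith [h.2]) hM.le),
    min_eq_right ((div_le_one hM).2 (by linarith [h.1]))]

lemma levelFrac_pos (hM : 0 ≤ M) (h : ε < L + M) : 0 < levelFrac L M ε := by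
  unfold levelFrac
  split_ifs with hM0 hεL
  · exact one_pos
  · subst hM0; exact absurd h.le (by simpa using hεL)
  · exact lt_min one_pos (lt_max_of_lt_right
      (div_pos (by linarith) (lt_of_le_of_ne hM (Ne.symm hM0))))

lemma levelFrac_lt_one (hM : 0 < M) (h : L < ε) : levelFrac L M ε < 1 := by
  rw [levelFrac, if_neg hM.ne']
  exact min_lt_of_right_lt (max_lt one_pos ((div_lt_one hM).2 (by linarith)))

lemma mul_levelFrac (hM : 0 ≤ M) :
    M * levelFrac L M ε = max (L + M - ε) 0 - max (L - ε) 0 := by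
  rcases le_or_gt ε L with hεL | hLε
  · rw [levelFrac_eq_one hM hεL, max_eq_left (by linarith), max_eq_left (by linarith)]
    ring
  rcases hM.eq_or_lt with rfl | hMpos
  · simp
  rw [max_eq_right (by linarith : L - ε ≤ 0)]
  rcases le_or_gt ε (L + M) with hε | hε
  · rw [levelFrac_of_mem_Icc hMpos ⟨hLε.le, hε⟩, max_eq_left (by linarith)]
    field_simp
    ring
  · rw [levelFrac_eq_zero hM hε, max_eq_right (by linarith)]
    ring

lemma levelFrac_antitone (hM : 0 ≤ M) : Antitone (levelFrac L M) := by
  intro a b hab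
  unfold levelFrac
  split_ifs with hM0 hb ha
  · exact le_rfl
  · exact absurd (hab.trans hb) ha
  · exact zero_le_one
  · exact le_rfl
  · exact min_le_min le_rfl (max_le_max le_rfl (by gcongr))

end LevelFrac

lemma sum_sub_telescope_lt {α : Type*} [LinearOrder α] (s : Finset α) (f : α → ℝ) (g : ℝ → ℝ) :
    ∑ v ∈ s, (g ((∑ u ∈ s with u < v, f u) + f v) - g (∑ u ∈ s with u < v, f u))
      = g (∑ v ∈ s, f v) - g 0 := by
  classical
  induction s using Finset.induction_on_max with
  | empty => simp
  | insert a s ha ih =>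
    have has : a ∉ s := fun h => lt_irrefl a (ha a h)
    have below_a : ({u ∈ insert a s | u < a} : Finset α) = s := by
      rw [filter_insert, if_neg (lt_irrefl a)]
      exact filter_true_of_mem ha
    have below_v : ∀ v ∈ s, ({u ∈ insert a s | u < v} : Finset α) = {u ∈ s | u < v} :=
      fun v hv => by rw [filter_insert, if_neg (ha v hv).not_gt]
    have hs : ∑ v ∈ s, (g ((∑ u ∈ insert a s with u < v, f u) + f v)
        - g (∑ u ∈ insert a s with u < v, f u)) = g (∑ v ∈ s, f v) - g 0 := by
      rw [← ih]
      exact sum_congr rfl fun v hv => by rw [below_v v hv]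
    rw [sum_insert has, below_a, hs, sum_insert has, add_comm (f a)]
    ring

section Finite

variable {Z : Type*} [Fintype Z] {q w B : Z → ℝ}

noncomputable def massBelow (q B : Z → ℝ) (v : ℝ) : ℝ := ∑ z, if B z < v then q z else 0

noncomputable def massAt (q B : Z → ℝ) (v : ℝ) : ℝ := ∑ z, if B z = v then q z else 0

/-- The probability over `τ` that the p-value `massBelow + τ * massAt` of `z` is at least `ε`. -/
noncomputable def selectFrac (q B : Z → ℝ) (z : Z) (ε : ℝ) : ℝ :=
  levelFrac (massBelow q B (B z)) (massAt q B (B z)) ε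

/-- The `N` criterion: for `w (x, y) = Q_X x` this is `E_{x,τ} |Γ^ε(x,τ)|`, except at the
finitely many `ε` where some p-value is constant in `τ` and equal to `ε`. -/
noncomputable def expectedSize (q w B : Z → ℝ) (ε : ℝ) : ℝ := ∑ z, w z * selectFrac q B z ε

lemma sum_ite_le_sum_ite (hq : ∀ z, 0 ≤ q z) {P R : Z → Prop} [DecidablePred P]
    [DecidablePred R] (h : ∀ z, P z → R z) :
    ∑ z, (if P z then q z else 0) ≤ ∑ z, if R z then q z else 0 :=
  sum_le_sum fun z _ => by
    by_cases hP : P z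
    · simp [hP, h z hP]
    · simp only [hP, if_false]; split_ifs <;> simp [hq z]

lemma massBelow_nonneg (hq : ∀ z, 0 ≤ q z) (v : ℝ) : 0 ≤ massBelow q B v :=
  sum_nonneg fun z _ => ite_nonneg (hq z) le_rfl

lemma massAt_nonneg (hq : ∀ z, 0 ≤ q z) (v : ℝ) : 0 ≤ massAt q B v :=
  sum_nonneg fun z _ => ite_nonneg (hq z) le_rfl

lemma massBelow_mono (hq : ∀ z, 0 ≤ q z) : Monotone (massBelow q B) :=
  fun _ _ h => sum_ite_le_sum_ite hq fun _ hz => hz.trans_le h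

lemma le_massAt (hq : ∀ z, 0 ≤ q z) (z : Z) : q z ≤ massAt q B (B z) := by
  unfold massAt
  simpa using single_le_sum (f := fun z' => if B z' = B z then q z' else 0)
    (fun z' _ => ite_nonneg (hq z') le_rfl) (mem_univ z)

lemma massBelow_add_massAt (q B : Z → ℝ) (v : ℝ) :
    massBelow q B v + massAt q B v = ∑ z, if B z ≤ v then q z else 0 := by
  rw [massBelow, massAt, ← sum_add_distrib]
  refine sum_congr rfl fun z _ => ?_
  rcases lt_trichotomy (B z) v with h | h | h
  · simp [h, h.ne, h.le]
  · simp [h]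
  · simp [h.not_gt, h.ne', h.not_ge]

lemma massBelow_add_massAt_le (hq : ∀ z, 0 ≤ q z) (v : ℝ) :
    massBelow q B v + massAt q B v ≤ ∑ z, q z := by
  rw [massBelow_add_massAt]
  exact sum_le_sum fun z _ => by split_ifs <;> simp [hq z]

lemma sum_mul_comp_eq_sum_massAt (q B : Z → ℝ) (F : ℝ → ℝ) :
    ∑ z, q z * F (B z) = ∑ v ∈ Finset.univ.image B, massAt q B v * F v := by
  rw [← sum_fiberwise_of_maps_to (g := B) fun z _ => mem_image_of_mem B (mem_univ z)]
  refine sum_congr rfl fun v _ => ?_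
  rw [massAt, sum_mul, sum_filter]
  refine sum_congr rfl fun z _ => ?_
  split_ifs with h
  · rw [h]
  · simp

lemma massBelow_eq_sum_massAt (q B : Z → ℝ) (v : ℝ) :
    massBelow q B v = ∑ u ∈ Finset.univ.image B with u < v, massAt q B u := by
  have h := sum_mul_comp_eq_sum_massAt q B fun u => if u < v then 1 else 0
  simp only [mul_ite, mul_one, mul_zero] at h
  rw [massBelow, h, sum_filter]

lemma sum_mul_selectFrac (hq : ∀ z, 0 ≤ q z) (hq1 : ∑ z, q z = 1) (B : Z → ℝ) {ε : ℝ}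
    (hε : ε ∈ Set.Icc (0 : ℝ) 1) : ∑ z, q z * selectFrac q B z ε = 1 - ε := by
  have hlevel : ∀ v ∈ Finset.univ.image B,
      massAt q B v * levelFrac (massBelow q B v) (massAt q B v) ε
      = max ((∑ u ∈ Finset.univ.image B with u < v, massAt q B u) + massAt q B v - ε) 0
        - max ((∑ u ∈ Finset.univ.image B with u < v, massAt q B u) - ε) 0 := fun v _ => by
    rw [mul_levelFrac (massAt_nonneg hq v), massBelow_eq_sum_massAt]
  have htotal : ∑ v ∈ Finset.univ.image B, massAt q B v = 1 := by
    simpa [hq1] using (sum_mul_comp_eq_sum_massAt q B fun _ => 1).symm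
  unfold selectFrac
  rw [sum_mul_comp_eq_sum_massAt q B fun v =>
      levelFrac (massBelow q B v) (massAt q B v) ε, sum_congr rfl hlevel,
    sum_sub_telescope_lt _ _ fun t => max (t - ε) 0, htotal,
    max_eq_left (by linarith [hε.2]), max_eq_right (by linarith [hε.1])]
  ring

lemma exists_quantile (hq1 : ∑ z, q z = 1) (B : Z → ℝ) {ε : ℝ} (hε : ε ∈ Set.Ioc (0 : ℝ) 1) :
    ∃ c, massBelow q B c < ε ∧ ε ≤ massBelow q B c + massAt q B c := by
  classical
  set T := (Finset.univ : Finset Z).filter fun z => ε ≤ massBelow q B (B z) + massAt q B (B z)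
  have hZ : (Finset.univ : Finset Z).Nonempty :=
    univ_nonempty_iff.2 (not_isEmpty_iff.1 fun h => by simp at hq1)
  obtain ⟨zmax, -, hzmax⟩ := exists_max_image _ B hZ
  have hT : T.Nonempty := by
    refine ⟨zmax, mem_filter.2 ⟨mem_univ _, ?_⟩⟩
    have hall : (∑ z, if B z ≤ B zmax then q z else 0) = 1 := by
      rw [← hq1]
      exact sum_congr rfl fun z hz => if_pos (hzmax z hz)
    rw [massBelow_add_massAt, hall]
    exact hε.2
  obtain ⟨z0, hz0T, hz0min⟩ := exists_min_image T B hT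
  refine ⟨B z0, ?_, (mem_filter.1 hz0T).2⟩
  by_contra! hge
  obtain ⟨z1, hz1⟩ : ∃ z, B z < B z0 := by
    by_contra! h
    have : massBelow q B (B z0) = 0 := sum_eq_zero fun z _ => if_neg (h z).not_gt
    linarith [hε.1]
  obtain ⟨z2, hz2S, hz2max⟩ := exists_max_image (Finset.univ.filter fun z => B z < B z0) B
    ⟨z1, mem_filter.2 ⟨mem_univ _, hz1⟩⟩
  have hz2 : B z2 < B z0 := (mem_filter.1 hz2S).2
  have hsame : massBelow q B (B z2) + massAt q B (B z2) = massBelow q B (B z0) := by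
    rw [massBelow_add_massAt, massBelow]
    refine sum_congr rfl fun z _ => if_congr ⟨fun h => h.trans_lt hz2, fun h => ?_⟩ rfl rfl
    exact hz2max z (mem_filter.2 ⟨mem_univ _, h⟩)
  have hz2T : z2 ∈ T := mem_filter.2 ⟨mem_univ _, hsame ▸ hge⟩
  exact (hz0min z2 hz2T).not_gt hz2

lemma exists_pos_quantile_div (hq1 : ∑ z, q z = 1) (hw : ∀ z, 0 < w z) {ε : ℝ}
    (hε : ε ∈ Set.Ioc (0 : ℝ) 1) :
    ∃ c, 0 < c ∧ massBelow q (q / w) c < ε ∧ ε ≤ massBelow q (q / w) c + massAt q (q / w) c := by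
  obtain ⟨c, hcut⟩ := exists_quantile hq1 (q / w) hε
  refine ⟨c, ?_, hcut⟩
  by_contra! hc
  -- every `z` of level `q z / w z = c ≤ 0` has `q z ≤ 0`, so the level carries no mass
  refine ((lt_add_iff_pos_right _).1 (hcut.1.trans_le hcut.2)).not_ge
    (sum_nonpos fun z _ => ?_)
  split_ifs with hz
  · simpa using (div_le_iff₀ (hw z)).1 (hz.trans_le hc)
  · exact le_rfl

variable {B' : Z → ℝ} {c ε : ℝ}

lemma selectFrac_eq_zero_of_cut (hq : ∀ z, 0 ≤ q z) (hc : massBelow q B' c < ε) {z : Z}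
    (h : ∀ z', B z' ≤ B z → B' z' < c) : selectFrac q B z ε = 0 := by
  refine levelFrac_eq_zero (massAt_nonneg hq _) (lt_of_le_of_lt ?_ hc)
  rw [massBelow_add_massAt]
  exact sum_ite_le_sum_ite hq h

lemma selectFrac_eq_one_of_cut (hq : ∀ z, 0 ≤ q z)
    (hc : ε ≤ massBelow q B' c + massAt q B' c) {z : Z} (h : ∀ z', B' z' ≤ c → B z' < B z) :
    selectFrac q B z ε = 1 := by
  refine levelFrac_eq_one (massAt_nonneg hq _) (hc.trans ?_)
  rw [massBelow_add_massAt]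
  exact sum_ite_le_sum_ite hq h

/-- Both measures select `q`-mass exactly `1 - ε`, so any multiple of `q` can be subtracted
from the weights. -/
lemma expectedSize_sub_expectedSize (hq : ∀ z, 0 ≤ q z) (hq1 : ∑ z, q z = 1) (B B' : Z → ℝ)
    (hc : c ≠ 0) (hε : ε ∈ Set.Icc (0 : ℝ) 1) :
    expectedSize q w B ε - expectedSize q w B' ε
      = ∑ z, (w z - q z / c) * (selectFrac q B z ε - selectFrac q B' z ε) := by
  have hsplit : ∑ z, (w z - q z / c) * (selectFrac q B z ε - selectFrac q B' z ε)
      = (expectedSize q w B ε - expectedSize q w B' ε)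
        - ((∑ z, q z * selectFrac q B z ε) - ∑ z, q z * selectFrac q B' z ε) / c := by
    simp only [expectedSize, ← sum_sub_distrib, sum_div]
    refine sum_congr rfl fun z _ => ?_
    field_simp
  rw [hsplit, sum_mul_selectFrac hq hq1 B hε, sum_mul_selectFrac hq hq1 B' hε]
  ring

lemma sub_div_eq_mul_sub_div {a b c : ℝ} (ha : a ≠ 0) (hc : c ≠ 0) :
    a - b / c = a * (c - b / a) / c := by
  field_simp

/-- The Neyman–Pearson step: at the quantile level `c` of `q / w`, the sign of `w z - q z / c`
is the sign of `c - q z / w z`, and `q / w` selects `z` exactly when `c < q z / w z`. -/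
lemma cut_term_nonneg (hq : ∀ z, 0 ≤ q z) (hw : ∀ z, 0 < w z) (hc : 0 < c)
    (hcut : massBelow q (q / w) c < ε ∧ ε ≤ massBelow q (q / w) c + massAt q (q / w) c)
    (B : Z → ℝ) (z : Z) :
    0 ≤ (w z - q z / c) * (selectFrac q B z ε - selectFrac q (q / w) z ε) := by
  rw [sub_div_eq_mul_sub_div (hw z).ne' hc.ne']
  rcases lt_trichotomy (q z / w z) c with h | h | h
  · rw [selectFrac_eq_zero_of_cut hq hcut.1 fun _ h' => h'.trans_lt h, sub_zero]
    exact mul_nonneg (div_nonneg (mul_nonneg (hw z).le (by linarith)) hc.le)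
      (levelFrac_nonneg _ _ _)
  · simp [h]
  · rw [selectFrac_eq_one_of_cut hq hcut.2 fun _ h' => h'.trans_lt h]
    refine mul_nonneg_of_nonpos_of_nonpos (div_nonpos_of_nonpos_of_nonneg
      (mul_nonpos_of_nonneg_of_nonpos (hw z).le (by linarith)) hc.le) ?_
    exact sub_nonpos.2 (levelFrac_le_one _ _ _)

lemma expectedSize_div_le (hq : ∀ z, 0 ≤ q z) (hq1 : ∑ z, q z = 1) (hw : ∀ z, 0 < w z)
    (B : Z → ℝ) (hε : ε ∈ Set.Ioc (0 : ℝ) 1) :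
    expectedSize q w (q / w) ε ≤ expectedSize q w B ε := by
  obtain ⟨c, hc, hcut⟩ := exists_pos_quantile_div hq1 hw hε
  have hsub := expectedSize_sub_expectedSize (w := w) hq hq1 B (q / w) hc.ne'
    (Set.Ioc_subset_Icc_self hε)
  linarith [sum_nonneg fun z (_ : z ∈ Finset.univ) => cut_term_nonneg hq hw hc hcut B z]

lemma expectedSize_div_lt (hq : ∀ z, 0 ≤ q z) (hq1 : ∑ z, q z = 1) (hw : ∀ z, 0 < w z)
    (hε : ε ∈ Set.Icc (0 : ℝ) 1) (hc : 0 < c)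
    (hcut : massBelow q (q / w) c < ε ∧ ε ≤ massBelow q (q / w) c + massAt q (q / w) c)
    {z : Z} (hz : 0 < (w z - q z / c) * (selectFrac q B z ε - selectFrac q (q / w) z ε)) :
    expectedSize q w (q / w) ε < expectedSize q w B ε := by
  have hsub := expectedSize_sub_expectedSize (w := w) hq hq1 B (q / w) hc.ne' hε
  have := sum_pos' (fun z (_ : z ∈ Finset.univ) => cut_term_nonneg hq hw hc hcut B z)
    ⟨z, mem_univ z, hz⟩
  linarith

lemma expectedSize_eq_of_refines (hq : ∀ z, 0 ≤ q z) (hq1 : ∑ z, q z = 1) (hw : ∀ z, 0 < w z)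
    (hB : ∀ z1 z2, q z1 / w z1 < q z2 / w z2 → B z1 < B z2) (hε : ε ∈ Set.Ioc (0 : ℝ) 1) :
    expectedSize q w B ε = expectedSize q w (q / w) ε := by
  obtain ⟨c, hc, hcut⟩ := exists_pos_quantile_div hq1 hw hε
  have hterm : ∀ z, (w z - q z / c) * (selectFrac q B z ε - selectFrac q (q / w) z ε) = 0 := by
    intro z
    rcases lt_trichotomy (q z / w z) c with h | h | h
    · rw [selectFrac_eq_zero_of_cut hq hcut.1 fun z' hz' =>
          (not_lt.1 fun h' => (hB z z' h').not_ge hz').trans_lt h,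
        selectFrac_eq_zero_of_cut hq hcut.1 fun _ h' => h'.trans_lt h, sub_self, mul_zero]
    · rw [sub_div_eq_mul_sub_div (hw z).ne' hc.ne', h]
      simp
    · rw [selectFrac_eq_one_of_cut hq hcut.2 fun z' hz' => hB z' z (hz'.trans_lt h),
        selectFrac_eq_one_of_cut hq hcut.2 fun _ h' => h'.trans_lt h, sub_self, mul_zero]
  have hsub := expectedSize_sub_expectedSize (w := w) hq hq1 B (q / w) hc.ne'
    (Set.Ioc_subset_Icc_self hε)
  rw [sum_eq_zero fun z _ => hterm z] at hsub
  linarith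

lemma exists_Ioo_expectedSize_div_lt (hq : ∀ z, 0 ≤ q z) (hq1 : ∑ z, q z = 1)
    (hw : ∀ z, 0 < w z) {z1 z2 : Z} (h12 : q z1 / w z1 < q z2 / w z2) (hB : B z2 ≤ B z1) :
    ∃ a b, 0 ≤ a ∧ a < b ∧ b ≤ 1 ∧
      ∀ ε ∈ Set.Ioo a b, expectedSize q w (q / w) ε < expectedSize q w B ε := by
  have hq2 : 0 < q z2 :=
    (div_pos_iff_of_pos_right (hw z2)).1 ((div_nonneg (hq z1) (hw z1).le).trans_lt h12)
  set D := massBelow q (q / w) (q z2 / w z2)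
  set M := massAt q (q / w) (q z2 / w z2)
  set L := massBelow q B (B z2)
  set U := L + massAt q B (B z2) with hU
  have hM : q z2 ≤ M := le_massAt hq z2
  have hMB : q z2 ≤ massAt q B (B z2) := le_massAt hq z2
  have hU1 : U ≤ 1 := hq1 ▸ massBelow_add_massAt_le hq _
  rcases lt_or_ge D U with hDU | hUD
  · -- cut at the level of `z2`: CP never selects `z1`, while `B` sometimes does
    refine ⟨D, min U (D + M), massBelow_nonneg hq _, lt_min hDU (by linarith),
      (min_le_left _ _).trans hU1, fun ε hε => ?_⟩
    have hc : 0 < q z2 / w z2 := div_pos hq2 (hw z2)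
    have hcut : D < ε ∧ ε ≤ D + M := ⟨hε.1, hε.2.le.trans (min_le_right _ _)⟩
    have hεU : ε < U := hε.2.trans_le (min_le_left _ _)
    have hUz1 : U ≤ massBelow q B (B z1) + massAt q B (B z1) := by
      rw [massBelow_add_massAt, hU, massBelow_add_massAt]
      exact sum_ite_le_sum_ite hq fun _ h => h.trans hB
    refine expectedSize_div_lt hq hq1 hw ⟨hε.1.le.trans' (massBelow_nonneg hq _), by linarith⟩
      hc hcut (z := z1) ?_
    rw [selectFrac_eq_zero_of_cut hq hcut.1 fun _ h => h.trans_lt h12, sub_zero,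
      sub_div_eq_mul_sub_div (hw z1).ne' hc.ne']
    exact mul_pos (div_pos (mul_pos (hw z1) (by linarith)) hc)
      (levelFrac_pos (massAt_nonneg hq _) (by linarith))
  · -- the quantile level lies below `z2`: CP always selects `z2`, while `B` sometimes does not
    refine ⟨L, U, massBelow_nonneg hq _, by linarith, hU1, fun ε hε => ?_⟩
    have hε1 : ε ∈ Set.Ioc (0 : ℝ) 1 :=
      ⟨(massBelow_nonneg hq _).trans_lt hε.1, hε.2.le.trans hU1⟩
    obtain ⟨c, hc, hcut⟩ := exists_pos_quantile_div hq1 hw hε1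
    have hc2 : c < q z2 / w z2 := by
      by_contra! h
      linarith [massBelow_mono (B := q / w) hq h, hcut.1, hε.2]
    refine expectedSize_div_lt hq hq1 hw (Set.Ioc_subset_Icc_self hε1) hc hcut (z := z2) ?_
    rw [selectFrac_eq_one_of_cut hq hcut.2 fun _ h => h.trans_lt hc2,
      sub_div_eq_mul_sub_div (hw z2).ne' hc.ne']
    refine mul_pos_of_neg_of_neg (div_neg_of_neg_of_pos
      (mul_neg_of_pos_of_neg (hw z2) (by linarith)) hc) (sub_neg.2 ?_)
    exact levelFrac_lt_one (by linarith) hε.1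

lemma expectedSize_antitone (hq : ∀ z, 0 ≤ q z) (hw : ∀ z, 0 ≤ w z) :
    Antitone (expectedSize q w B) := fun _ _ h =>
  sum_le_sum fun z _ =>
    mul_le_mul_of_nonneg_left (levelFrac_antitone (massAt_nonneg hq _) h) (hw z)

end Finite

section Calculus

open Set MeasureTheory intervalIntegral
open scoped Interval

lemma integral_mul_pos_of_pos {f g : ℝ → ℝ} {a b : ℝ} (hf : ∀ x ∈ Ι a b, 0 ≤ f x)
    (hfi : IntervalIntegrable f volume a b) (hF : 0 < ∫ x in a..b, f x)
    (hg : ∀ x ∈ Ι a b, 0 < g x) (hfgi : IntervalIntegrable (fun x => f x * g x) volume a b) :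
    0 < ∫ x in a..b, f x * g x := by
  have hae : ∀ {h : ℝ → ℝ}, (∀ x ∈ Ι a b, 0 ≤ h x) → 0 ≤ᵐ[volume.restrict (Ι a b)] h :=
    fun h => (ae_restrict_mem measurableSet_uIoc).mono h
  obtain ⟨hab, hpos⟩ := (integral_pos_iff_support_of_nonneg_ae' (hae hf) hfi).1 hF
  refine (integral_pos_iff_support_of_nonneg_ae' (hae fun x hx => mul_nonneg (hf x hx)
    (hg x hx).le) hfgi).2 ⟨hab, hpos.trans_le (measure_mono ?_)⟩
  rintro x ⟨hx, hxI⟩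
  exact ⟨mul_ne_zero hx (hg x (by rwa [uIoc_of_le hab.le])).ne', hxI⟩

variable {φ : ℝ → ℝ}

lemma continuousOn_derivWithin_Icc (hφ : ContDiffOn ℝ 1 φ (Icc 0 1)) :
    ContinuousOn (derivWithin φ (Icc 0 1)) (Icc 0 1) :=
  hφ.continuousOn_derivWithin (uniqueDiffOn_Icc one_pos) le_rfl

lemma hasDerivAt_derivWithin_Icc (hφ : ContDiffOn ℝ 1 φ (Icc 0 1)) {x : ℝ}
    (hx : x ∈ Ioo (0 : ℝ) 1) : HasDerivAt φ (derivWithin φ (Icc 0 1) x) x :=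
  (hφ.differentiableOn one_ne_zero x (Ioo_subset_Icc_self hx)).hasDerivWithinAt.hasDerivAt
    (Icc_mem_nhds hx.1 hx.2)

lemma integral_derivWithin_Icc (hφ : ContDiffOn ℝ 1 φ (Icc 0 1)) {a b : ℝ} (ha : 0 ≤ a)
    (hab : a ≤ b) (hb : b ≤ 1) : ∫ x in a..b, derivWithin φ (Icc 0 1) x = φ b - φ a :=
  integral_eq_sub_of_hasDerivAt_of_le hab (hφ.continuousOn.mono (Icc_subset_Icc ha hb))
    (fun _ hx => hasDerivAt_derivWithin_Icc hφ ⟨ha.trans_lt hx.1, hx.2.trans_le hb⟩)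
    (((continuousOn_derivWithin_Icc hφ).mono (Icc_subset_Icc ha hb)).intervalIntegrable_of_Icc hab)

lemma intervalIntegrable_derivWithin_mul (hφ : ContDiffOn ℝ 1 φ (Icc 0 1)) {g : ℝ → ℝ}
    (hg : Antitone g) {a b : ℝ} (ha : a ∈ Icc (0 : ℝ) 1) (hb : b ∈ Icc (0 : ℝ) 1) :
    IntervalIntegrable (fun x => derivWithin φ (Icc 0 1) x * g x) volume a b :=
  hg.intervalIntegrable.continuousOn_mul
    ((continuousOn_derivWithin_Icc hφ).mono (uIcc_subset_Icc ha hb))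

variable {L M : ℝ}

lemma integral_derivWithin_mul_levelFrac_Icc (hφ : ContDiffOn ℝ 1 φ (Icc 0 1)) (hL : 0 ≤ L)
    (hM : 0 ≤ M) (hLM : L + M ≤ 1) :
    ∫ ε in L..L + M, derivWithin φ (Icc 0 1) ε * levelFrac L M ε
      = (∫ τ in (0 : ℝ)..1, φ (L + τ * M)) - φ L := by
  rcases hM.eq_or_lt with rfl | hMpos
  · simp
  have hsub : Icc L (L + M) ⊆ Icc 0 1 := Icc_subset_Icc hL hLM
  have hsubst : ∫ τ in (0 : ℝ)..1, φ (L + τ * M) = M⁻¹ * ∫ s in L..L + M, φ s := by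
    simp_rw [mul_comm _ M]
    rw [integral_comp_add_mul _ hMpos.ne']
    simp
  have hφi : IntervalIntegrable φ volume L (L + M) :=
    (hφ.continuousOn.mono hsub).intervalIntegrable_of_Icc (by linarith)
  have hφ'i : IntervalIntegrable (fun ε => derivWithin φ (Icc 0 1) ε * (L + M - ε)) volume
      L (L + M) :=
    (((continuousOn_derivWithin_Icc hφ).mono hsub).mul
      (continuousOn_const.sub continuousOn_id)).intervalIntegrable_of_Icc (by linarith)
  have hparts : ∫ ε in L..L + M, (derivWithin φ (Icc 0 1) ε * (L + M - ε) - φ ε)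
      = -(φ L * M) := by
    rw [integral_eq_sub_of_hasDerivAt_of_le (f := fun ε => φ ε * (L + M - ε)) (by linarith)
      ((hφ.continuousOn.mono hsub).mul (continuousOn_const.sub continuousOn_id))
      (fun x hx => ?_) (hφ'i.sub hφi)]
    · ring
    · have hx' : x ∈ Ioo (0 : ℝ) 1 := ⟨hL.trans_lt hx.1, hx.2.trans_le hLM⟩
      exact ((hasDerivAt_derivWithin_Icc hφ hx').fun_mul
        ((hasDerivAt_id' x).const_sub (L + M))).congr_deriv (by ring)
  rw [integral_sub hφ'i hφi] at hparts
  calc ∫ ε in L..L + M, derivWithin φ (Icc 0 1) ε * levelFrac L M ε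
      = ∫ ε in L..L + M, derivWithin φ (Icc 0 1) ε * (L + M - ε) * M⁻¹ := by
        refine integral_congr fun ε hε => ?_
        rw [Set.uIcc_of_le (by linarith)] at hε
        rw [levelFrac_of_mem_Icc hMpos hε]
        ring
    _ = _ := by
        rw [intervalIntegral.integral_mul_const, hsubst]
        field_simp
        linarith

/-- Layer-cake formula: average `φ p = φ 0 + ∫₀¹ φ'(ε) 1[ε ≤ p] dε` over `p = L + τ M`. -/
lemma integral_comp_add_mul_eq (hφ : ContDiffOn ℝ 1 φ (Icc 0 1)) (hL : 0 ≤ L) (hM : 0 ≤ M)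
    (hLM : L + M ≤ 1) :
    ∫ τ in (0 : ℝ)..1, φ (L + τ * M)
      = φ 0 + ∫ ε in (0 : ℝ)..1, derivWithin φ (Icc 0 1) ε * levelFrac L M ε := by
  have hi : ∀ {a b : ℝ}, a ∈ Icc (0 : ℝ) 1 → b ∈ Icc (0 : ℝ) 1 → IntervalIntegrable
      (fun ε => derivWithin φ (Icc 0 1) ε * levelFrac L M ε) volume a b :=
    fun ha hb => intervalIntegrable_derivWithin_mul hφ (levelFrac_antitone hM) ha hb
  have hlow : ∫ ε in (0 : ℝ)..L, derivWithin φ (Icc 0 1) ε * levelFrac L M ε = φ L - φ 0 := by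
    rw [← integral_derivWithin_Icc hφ le_rfl hL (by linarith)]
    refine integral_congr fun ε hε => ?_
    rw [Set.uIcc_of_le hL] at hε
    rw [levelFrac_eq_one hM hε.2, mul_one]
  have hhigh : ∫ ε in L + M..1, derivWithin φ (Icc 0 1) ε * levelFrac L M ε = 0 := by
    refine (intervalIntegral.integral_congr_ae (ae_of_all _ fun ε hε => ?_)).trans integral_zero
    rw [uIoc_of_le hLM] at hε
    rw [levelFrac_eq_zero hM hε.1, mul_zero]
  have h0 : (0 : ℝ) ∈ Icc (0 : ℝ) 1 := ⟨le_rfl, zero_le_one⟩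
  have hL1 : L ∈ Icc (0 : ℝ) 1 := ⟨hL, by linarith⟩
  have hLM1 : L + M ∈ Icc (0 : ℝ) 1 := ⟨by linarith, hLM⟩
  rw [← integral_add_adjacent_intervals (hi h0 hL1) (hi hL1 ⟨zero_le_one, le_rfl⟩),
    ← integral_add_adjacent_intervals (hi hL1 hLM1) (hi hLM1 ⟨zero_le_one, le_rfl⟩), hlow,
    integral_derivWithin_mul_levelFrac_Icc hφ hL hM hLM, hhigh]
  ring

end Calculus

section Criterion

open Set MeasureTheory intervalIntegral

variable {Z : Type*} [Fintype Z] {q w B : Z → ℝ} {φ : ℝ → ℝ}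

lemma sum_mul_integral_eq (hφ : ContDiffOn ℝ 1 φ (Icc 0 1)) (hq : ∀ z, 0 ≤ q z)
    (hq1 : ∑ z, q z = 1) (w B : Z → ℝ) :
    ∑ z, w z * ∫ τ in (0 : ℝ)..1, φ (massBelow q B (B z) + τ * massAt q B (B z))
      = (∑ z, w z) * φ 0
        + ∫ ε in (0 : ℝ)..1, derivWithin φ (Icc 0 1) ε * expectedSize q w B ε := by
  have hI : ∀ z, IntervalIntegrable
      (fun ε => w z * (derivWithin φ (Icc 0 1) ε * selectFrac q B z ε)) volume 0 1 :=
    fun z => (intervalIntegrable_derivWithin_mul hφ (levelFrac_antitone (massAt_nonneg hq _))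
      ⟨le_rfl, zero_le_one⟩ ⟨zero_le_one, le_rfl⟩).const_mul _
  calc ∑ z, w z * ∫ τ in (0 : ℝ)..1, φ (massBelow q B (B z) + τ * massAt q B (B z))
      = ∑ z, (w z * φ 0
          + ∫ ε in (0 : ℝ)..1, w z * (derivWithin φ (Icc 0 1) ε * selectFrac q B z ε)) :=
        Finset.sum_congr rfl fun z _ => by
          rw [integral_comp_add_mul_eq hφ (massBelow_nonneg hq _) (massAt_nonneg hq _)
            (hq1 ▸ massBelow_add_massAt_le hq _), intervalIntegral.integral_const_mul, mul_add]
          rfl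
    _ = _ := by
        rw [Finset.sum_add_distrib, ← Finset.sum_mul, ← integral_finsetSum fun z _ => hI z]
        congr 1
        refine integral_congr fun ε _ => ?_
        rw [expectedSize, Finset.mul_sum]
        exact Finset.sum_congr rfl fun z _ => by ring

lemma integral_expectedSize_div_le (hφ : ContDiffOn ℝ 1 φ (Icc 0 1))
    (hφm : MonotoneOn φ (Icc 0 1)) (hq : ∀ z, 0 ≤ q z) (hq1 : ∑ z, q z = 1)
    (hw : ∀ z, 0 < w z) (B : Z → ℝ) :
    ∫ ε in (0 : ℝ)..1, derivWithin φ (Icc 0 1) ε * expectedSize q w (q / w) ε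
      ≤ ∫ ε in (0 : ℝ)..1, derivWithin φ (Icc 0 1) ε * expectedSize q w B ε := by
  have hi : ∀ B' : Z → ℝ, IntervalIntegrable
      (fun ε => derivWithin φ (Icc 0 1) ε * expectedSize q w B' ε) volume 0 1 :=
    fun _ => intervalIntegrable_derivWithin_mul hφ (expectedSize_antitone hq fun z => (hw z).le)
      ⟨le_rfl, zero_le_one⟩ ⟨zero_le_one, le_rfl⟩
  exact integral_mono_on_of_le_Ioo zero_le_one (hi _) (hi _) fun ε hε =>
    mul_le_mul_of_nonneg_left (expectedSize_div_le hq hq1 hw B (Ioo_subset_Ioc_self hε))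
      hφm.derivWithin_nonneg

lemma integral_expectedSize_eq_of_refines (hq : ∀ z, 0 ≤ q z) (hq1 : ∑ z, q z = 1)
    (hw : ∀ z, 0 < w z) (hB : ∀ z1 z2, q z1 / w z1 < q z2 / w z2 → B z1 < B z2) :
    ∫ ε in (0 : ℝ)..1, derivWithin φ (Icc 0 1) ε * expectedSize q w B ε
      = ∫ ε in (0 : ℝ)..1, derivWithin φ (Icc 0 1) ε * expectedSize q w (q / w) ε :=
  integral_congr_Ioo_of_le zero_le_one fun ε hε => by
    simp only [expectedSize_eq_of_refines hq hq1 hw hB (Ioo_subset_Ioc_self hε)]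

lemma integral_expectedSize_div_lt (hφ : ContDiffOn ℝ 1 φ (Icc 0 1))
    (hφm : StrictMonoOn φ (Icc 0 1)) (hq : ∀ z, 0 ≤ q z) (hq1 : ∑ z, q z = 1)
    (hw : ∀ z, 0 < w z) (hB : ¬ ∀ z1 z2, q z1 / w z1 < q z2 / w z2 → B z1 < B z2) :
    ∫ ε in (0 : ℝ)..1, derivWithin φ (Icc 0 1) ε * expectedSize q w (q / w) ε
      < ∫ ε in (0 : ℝ)..1, derivWithin φ (Icc 0 1) ε * expectedSize q w B ε := by
  push Not at hB
  obtain ⟨z1, z2, h12, h21⟩ := hB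
  obtain ⟨a, b, ha, hab, hb, hlt⟩ := exists_Ioo_expectedSize_div_lt hq hq1 hw h12 h21
  obtain ⟨m, ham, hmb⟩ := exists_between hab
  have hφ' : ∀ ε, 0 ≤ derivWithin φ (Icc 0 1) ε := fun _ => hφm.monotoneOn.derivWithin_nonneg
  have hi : ∀ (B' : Z → ℝ) {s t : ℝ}, s ∈ Icc (0 : ℝ) 1 → t ∈ Icc (0 : ℝ) 1 →
      IntervalIntegrable (fun ε => derivWithin φ (Icc 0 1) ε * expectedSize q w B' ε)
        volume s t :=
    fun _ _ _ hs ht => intervalIntegrable_derivWithin_mul hφ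
      (expectedSize_antitone hq fun z => (hw z).le) hs ht
  have hgap : ∀ {s t : ℝ}, s ∈ Icc (0 : ℝ) 1 → t ∈ Icc (0 : ℝ) 1 → IntervalIntegrable
      (fun ε => derivWithin φ (Icc 0 1) ε * (expectedSize q w B ε - expectedSize q w (q / w) ε))
        volume s t :=
    fun hs ht => by simpa only [mul_sub] using (hi B hs ht).sub (hi (q / w) hs ht)
  have ha1 : a ∈ Icc (0 : ℝ) 1 := ⟨ha, by linarith⟩
  have hm1 : m ∈ Icc (0 : ℝ) 1 := ⟨by linarith, by linarith⟩
  have hpos : 0 < ∫ ε in a..m,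
      derivWithin φ (Icc 0 1) ε * (expectedSize q w B ε - expectedSize q w (q / w) ε) := by
    refine integral_mul_pos_of_pos (fun ε _ => hφ' ε)
      (((continuousOn_derivWithin_Icc hφ).mono (Icc_subset_Icc ha hm1.2)).intervalIntegrable_of_Icc
        (by linarith)) ?_ (fun ε hε => sub_pos.2 (hlt ε ?_)) (hgap ha1 hm1)
    · rw [integral_derivWithin_Icc hφ ha (by linarith) hm1.2]
      exact sub_pos.2 (hφm ha1 hm1 (by linarith))
    · rw [uIoc_of_le (by linarith)] at hε
      exact ⟨hε.1, hε.2.trans_lt (by linarith)⟩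
  have hmono := integral_mono_interval ha ham.le hm1.2
    ((ae_restrict_mem measurableSet_Ioc).mono fun ε hε => mul_nonneg (hφ' ε)
      (sub_nonneg.2 (expectedSize_div_le hq hq1 hw B hε)))
    (hgap ⟨le_rfl, zero_le_one⟩ ⟨zero_le_one, le_rfl⟩)
  simp only [mul_sub] at hmono hpos
  rw [integral_sub (hi B ⟨le_rfl, zero_le_one⟩ ⟨zero_le_one, le_rfl⟩)
    (hi (q / w) ⟨le_rfl, zero_le_one⟩ ⟨zero_le_one, le_rfl⟩)] at hmono
  linarith

end Criterion

lemma expXT_sum_comp_pValue {X Y : Type*} [Fintype X] [Fintype Y] [DecidableEq Y]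
    {φ : ℝ → ℝ} (hφ : ContinuousOn φ (Set.Icc 0 1)) {Q : X × Y → ℝ} (hQ0 : ∀ z, 0 ≤ Q z)
    (hQ1 : ∑ z : X × Y, Q z = 1) (B : X × Y → ℝ) :
    expXT Q (fun x τ => ∑ y, φ (pValue Q B x y τ))
      = ∑ z : X × Y, margX Q z.1 * ∫ τ in (0 : ℝ)..1,
          φ (massBelow Q B (B z) + τ * massAt Q B (B z)) := by
  have hI : ∀ z : X × Y, IntervalIntegrable
      (fun τ => φ (massBelow Q B (B z) + τ * massAt Q B (B z))) MeasureTheory.volume 0 1 := by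
    intro z
    have hL := massBelow_nonneg (B := B) hQ0 (B z)
    have hM := massAt_nonneg (B := B) hQ0 (B z)
    have hLM := hQ1 ▸ massBelow_add_massAt_le (B := B) hQ0 (B z)
    refine (hφ.comp (by fun_prop) fun τ hτ => ?_).intervalIntegrable_of_Icc zero_le_one
    exact ⟨add_nonneg hL (mul_nonneg hτ.1 hM), by nlinarith [hτ.2]⟩
  rw [expXT, Fintype.sum_prod_type]
  refine Finset.sum_congr rfl fun x _ => ?_
  change margX Q x * ∫ τ in (0 : ℝ)..1,
    ∑ y, φ (massBelow Q B (B (x, y)) + τ * massAt Q B (B (x, y))) = _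
  rw [intervalIntegral.integral_finsetSum fun y _ => hI (x, y), Finset.mul_sum]

end ConformalOptimality

open ConformalOptimality in
theorem stmt17_general {X Y : Type*} [Fintype X] [Fintype Y] [DecidableEq Y]
    (Q : X × Y → ℝ) (hQ0 : ∀ z, 0 ≤ Q z)
    (hQ1 : ∑ z : X × Y, Q z = 1) (hQX : ∀ x, 0 < margX Q x) (A : X × Y → ℝ) (φ : ℝ → ℝ)
    (hφ : ContDiffOn ℝ 1 φ (Set.Icc 0 1)) (hφm : StrictMonoOn φ (Set.Icc 0 1)) :
    (∀ B : X × Y → ℝ,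
        expXT Q (fun x τ => ∑ y, φ (pValue Q A x y τ))
          ≤ expXT Q (fun x τ => ∑ y, φ (pValue Q B x y τ)))
      ↔ Refines A (condQ Q) := by
  set w : X × Y → ℝ := fun z => margX Q z.1
  have hw : ∀ z, 0 < w z := fun z => hQX z.1
  have hobj : ∀ B, expXT Q (fun x τ => ∑ y, φ (pValue Q B x y τ))
      = (∑ z, w z) * φ 0
        + ∫ ε in (0 : ℝ)..1, derivWithin φ (Set.Icc 0 1) ε * expectedSize Q w B ε :=
    fun B => by rw [expXT_sum_comp_pValue hφ.continuousOn hQ0 hQ1, sum_mul_integral_eq hφ hQ0 hQ1]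
  have hcond : condQ Q = Q / w := rfl
  simp only [hobj, add_le_add_iff_left, hcond]
  constructor
  · intro hopt
    by_contra hA
    exact (hopt (Q / w)).not_gt (integral_expectedSize_div_lt hφ hφm hQ0 hQ1 hw hA)
  · intro hA B
    rw [integral_expectedSize_eq_of_refines hQ0 hQ1 hw hA]
    exact integral_expectedSize_div_le hφ hφm.monotoneOn hQ0 hQ1 hw B

/-- For continuously differentiable strictly increasing `φ`: `O(S_φ) = R(CP)`. -/
theorem stmt17 {X Y : Type*} [Fintype X] [Fintype Y] [DecidableEq Y] [Nonempty X]
    (hY : 2 ≤ Fintype.card Y) (Q : X × Y → ℝ) (hQ0 : ∀ z, 0 ≤ Q z)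
    (hQ1 : ∑ z : X × Y, Q z = 1) (hQX : ∀ x, 0 < margX Q x) (A : X × Y → ℝ) (φ : ℝ → ℝ)
    (hφ : ContDiffOn ℝ 1 φ (Set.Icc 0 1)) (hφm : StrictMonoOn φ (Set.Icc 0 1)) :
    (∀ B : X × Y → ℝ,
        expXT Q (fun x τ => ∑ y, φ (pValue Q A x y τ))
          ≤ expXT Q (fun x τ => ∑ y, φ (pValue Q B x y τ)))
      ↔ Refines A (condQ Q) :=
  stmt17_general Q hQ0 hQ1 hQX A φ hφ hφm
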